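/- arXiv:1503.03740 — 4 statements merged into one kernel-verified Lean document; each statement's English description precedes it below -/
import Mathlib

section
/- Let ∇ and ∇' be two metric connections on a Riemannian manifold (M,g) with ∇ the Levi-Civita connection, and let ξ_X Y = ∇_X Y − ∇'_X Y be their difference, so each ξ_X is a skew-symmetric endomorphism taking values in a parallel subbundle m(M) of so(M) with orthogonal complement g(M). Then the g(M)-component and m(M)-component of ∇_X ξ_Y are given by (∇_X ξ_Y)_g = [ξ_X, ξ_Y]_g and (∇_X ξ_Y)_m = ∇'_X ξ_Y + [ξ_X, ξ_Y]_m. -/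
/-- Components of `∇_X ξ_Y` with respect to the orthogonal `∇'`-parallel decomposition
`so(M) = g(M) ⊕ m(M)` (projections `pg`, `pm`): `(∇_X ξ_Y)_g = [ξ_X, ξ_Y]_g` and
`(∇_X ξ_Y)_m = ∇'_X ξ_Y + [ξ_X, ξ_Y]_m`.  Here `conn` is the Levi-Civita connection,
`conn'` the `G`-connection, `ξ_X = conn_X − conn'_X ∈ m(M)`, and `connE`, `connE'` are
the induced connections on endomorphism fields. -/
theorem stmt8 (F VF : Type*) [CommRing F] [AddCommGroup VF] [Module F VF]
    (conn conn' : VF → VF → VF)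
    (connE connE' : VF → Module.End F VF → Module.End F VF)
    (hconnE : ∀ (X : VF) (α : Module.End F VF) (Y : VF),
      connE X α Y = conn X (α Y) - α (conn X Y))
    (hconnE' : ∀ (X : VF) (α : Module.End F VF) (Y : VF),
      connE' X α Y = conn' X (α Y) - α (conn' X Y))
    (ξ : VF → Module.End F VF)
    (hξ : ∀ X Y, ξ X Y = conn X Y - conn' X Y)
    (pg pm : Module.End F VF →ₗ[F] Module.End F VF)
    (hsum : ∀ α, pg α + pm α = α)
    (hgg : ∀ α, pg (pg α) = pg α) (hmm : ∀ α, pm (pm α) = pm α)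
    (hgm : ∀ α, pg (pm α) = 0)
    (hpar : ∀ X α, connE' X (pg α) = pg (connE' X α))
    (hξm : ∀ X, pm (ξ X) = ξ X)
    (hbracketg : ∀ α β : Module.End F VF, pg α = α → pg β = β →
      pg (α * β - β * α) = α * β - β * α)
    (X Y : VF) :
    pg (connE X (ξ Y)) = pg (ξ X * ξ Y - ξ Y * ξ X) ∧
    pm (connE X (ξ Y)) = connE' X (ξ Y) + pm (ξ X * ξ Y - ξ Y * ξ X) := by
  -- The key identity: ∇_X α = ∇'_X α + [ξ_X, α]
  have hkey : connE X (ξ Y) = connE' X (ξ Y) + (ξ X * ξ Y - ξ Y * ξ X) := by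
    ext Z
    have hconnX : ∀ W, conn X W = conn' X W + ξ X W := by
      intro W; rw [hξ]; abel
    simp only [LinearMap.add_apply, LinearMap.sub_apply, Module.End.mul_apply,
      hconnE, hconnE', hconnX, map_add]
    abel
  -- conn' X 0 = 0, hence connE' X 0 = 0
  have hz : connE' X (0 : Module.End F VF) = 0 := by
    have h0 : conn' X 0 = 0 := by
      have := hconnE' X 0 0
      simpa using this.symm
    ext Z
    simpa [h0] using hconnE' X 0 Z
  -- pg (ξ Y) = 0
  have hpgξ : pg (ξ Y) = 0 := by
    rw [← hξm Y, hgm]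
  -- pg (connE' X (ξ Y)) = 0
  have hpgc : pg (connE' X (ξ Y)) = 0 := by
    rw [← hpar, hpgξ, hz]
  have hpmc : pm (connE' X (ξ Y)) = connE' X (ξ Y) := by
    have := hsum (connE' X (ξ Y))
    rw [hpgc, zero_add] at this
    exact this
  constructor
  · rw [hkey, map_add, hpgc, zero_add]
  · rw [hkey, map_add, hpmc]
end

section
/- Let ξ : V → m be a linear map from an inner product space (V, g) into an inner product subspace (m, B) of skew-symmetric endomorphisms, let ξ· : m → V denote the negative adjoint (g(ξ·α, X) = −B(α, ξ_X)), and let L = Id_V − ξ·∘ξ, which is g-symmetric positive definite. Then for every X ∈ V, the vector X^{h'} := X^h + ξ_X (in the orthogonal direct sum V ⊕ so, with so ⊇ m) satisfies: (i) ⟨X^{h'}, Y^{h'}⟩ = g(X, LY); (ii) the orthogonal projection of X^h onto the subspace T = {Y^{h'} : Y ∈ V} ⊕ g' (where g' = m^⊥ ∩ so) equals (L⁻¹X)^{h'}; (iii) the orthogonal projection of α ∈ so onto T equals α_g − (L⁻¹(ξ·α_m))^{h'}, where α = α_g + α_m is the decomposition along so = g' ⊕ m. -/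
/-! The projection formulas rest on one identity: for `β ∈ m` and `γ ∈ mᗮ`,
`⟨(u, β), Y^{h'} + γ⟩ = g(u − ξ·β, Y)`, since `ξ·` is the negative adjoint of `ξ` and `β ⟂ γ`.
Hence a vector is orthogonal to `T` as soon as `u = ξ·β`, and both residuals `X^h − (L⁻¹X)^{h'}` and
`α − α_g + (L⁻¹ξ·α_m)^{h'}` are of this form because `L L⁻¹ = Id`. -/

open scoped InnerProductSpace

section NegAdjoint

variable {V W : Type*} [NormedAddCommGroup V] [InnerProductSpace ℝ V]
  [NormedAddCommGroup W] [InnerProductSpace ℝ W] {ξ : V →ₗ[ℝ] W} {ξd : W →ₗ[ℝ] V}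

theorem inner_add_inner_apply_apply_eq_inner_sub
    (hξd : ∀ (α : W) (X : V), ⟪ξd α, X⟫_ℝ = -⟪α, ξ X⟫_ℝ) (X Y : V) :
    ⟪X, Y⟫_ℝ + ⟪ξ X, ξ Y⟫_ℝ = ⟪X, Y - ξd (ξ Y)⟫_ℝ := by
  rw [inner_sub_right, real_inner_comm (ξd (ξ Y)) X, hξd, real_inner_comm (ξ X)]
  ring

theorem inner_add_inner_apply_add_eq_inner_sub
    (hξd : ∀ (α : W) (X : V), ⟪ξd α, X⟫_ℝ = -⟪α, ξ X⟫_ℝ) {K : Submodule ℝ W} {β γ : W}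
    (hβ : β ∈ K) (hγ : γ ∈ Kᗮ) (u Y : V) :
    ⟪u, Y⟫_ℝ + ⟪β, ξ Y + γ⟫_ℝ = ⟪u - ξd β, Y⟫_ℝ := by
  rw [inner_add_right, Submodule.inner_right_of_mem_orthogonal hβ hγ, inner_sub_left, hξd]
  ring

end NegAdjoint

theorem stmt11_general (V so : Type*) [NormedAddCommGroup V] [InnerProductSpace ℝ V]
    [NormedAddCommGroup so] [InnerProductSpace ℝ so]
    (m : Submodule ℝ so)
    (ξ : V →ₗ[ℝ] so) (hξm : ∀ X, ξ X ∈ m)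
    (ξd : so →ₗ[ℝ] V) (hξd : ∀ (α : so) (X : V), (inner ℝ (ξd α) X : ℝ) = - inner ℝ α (ξ X))
    (Linv : V →ₗ[ℝ] V)
    (hLinv1 : ∀ X : V, Linv X - ξd (ξ (Linv X)) = X) :
    (∀ X Y : V,
      (inner ℝ X Y : ℝ) + inner ℝ (ξ X) (ξ Y) = inner ℝ X (Y - ξd (ξ Y))) ∧
    (∀ X : V,
      (∃ (Y : V) (γ : so), γ ∈ mᗮ ∧
        ((Linv X, ξ (Linv X)) : V × so) = (Y, ξ Y + γ)) ∧
      (∀ (Y : V) (γ : so), γ ∈ mᗮ →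
        (inner ℝ (X - Linv X) Y : ℝ) + inner ℝ ((0 : so) - ξ (Linv X)) (ξ Y + γ) = 0)) ∧
    (∀ (α αg αm : so), αg ∈ mᗮ → αm ∈ m → α = αg + αm →
      (∃ (Y : V) (γ : so), γ ∈ mᗮ ∧
        ((-(Linv (ξd αm)), αg - ξ (Linv (ξd αm))) : V × so) = (Y, ξ Y + γ)) ∧
      (∀ (Y : V) (γ : so), γ ∈ mᗮ →
        (inner ℝ ((0 : V) - (-(Linv (ξd αm)))) Y : ℝ)
          + inner ℝ (α - (αg - ξ (Linv (ξd αm)))) (ξ Y + γ) = 0)) := by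
  refine ⟨inner_add_inner_apply_apply_eq_inner_sub hξd, fun X => ⟨?_, fun Y γ hγ => ?_⟩,
    fun α αg αm hαg hαm hα => ⟨?_, fun Y γ hγ => ?_⟩⟩
  · exact ⟨Linv X, 0, m.orthogonal.zero_mem, by simp⟩
  · have hres : X - Linv X - ξd (0 - ξ (Linv X)) = 0 := by
      rw [map_sub, map_zero, zero_sub, sub_neg_eq_add, sub_add, hLinv1, sub_self]
    rw [inner_add_inner_apply_add_eq_inner_sub hξd (m.sub_mem m.zero_mem (hξm _)) hγ, hres,
      inner_zero_left]
  · exact ⟨-(Linv (ξd αm)), αg, hαg, by simp [sub_eq_neg_add]⟩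
  · set Z := Linv (ξd αm)
    have hα' : α - (αg - ξ Z) = αm + ξ Z := by
      rw [hα]
      abel
    have hres : 0 - -Z - ξd (αm + ξ Z) = 0 := by
      rw [map_add]
      linear_combination (norm := module) hLinv1 (ξd αm)
    rw [hα', inner_add_inner_apply_add_eq_inner_sub hξd (m.add_mem hαm (hξm _)) hγ, hres,
      inner_zero_left]

/-- Pointwise linear algebra of Proposition 4: in the orthogonal direct sum `V ⊕ so`
(inner product `⟨(X,α),(Y,β)⟩ = ⟪X,Y⟫ + ⟪α,β⟫`), with `ξ : V → m ⊆ so`, negative adjoint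
`ξd` (`⟪ξd α, X⟫ = −⟪α, ξ X⟫`), `L = Id − ξd∘ξ` with inverse `Linv`,
`X^{h'} = (X, ξ X)` and `T = {Y^{h'}} ⊕ g'` with `g' = mᗮ`:
(i) `⟨X^{h'}, Y^{h'}⟩ = g(X, LY)`;
(ii) the orthogonal projection of `X^h = (X,0)` onto `T` is `(L⁻¹X)^{h'}`;
(iii) the orthogonal projection of `(0,α)` onto `T` is `α_g − (L⁻¹(ξd α_m))^{h'}`. -/
theorem stmt11 (V so : Type*) [NormedAddCommGroup V] [InnerProductSpace ℝ V]
    [NormedAddCommGroup so] [InnerProductSpace ℝ so]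
    (m : Submodule ℝ so)
    (ξ : V →ₗ[ℝ] so) (hξm : ∀ X, ξ X ∈ m)
    (ξd : so →ₗ[ℝ] V) (hξd : ∀ (α : so) (X : V), (inner ℝ (ξd α) X : ℝ) = - inner ℝ α (ξ X))
    (Linv : V →ₗ[ℝ] V)
    (hLinv1 : ∀ X : V, Linv X - ξd (ξ (Linv X)) = X)
    (hLinv2 : ∀ X : V, Linv (X - ξd (ξ X)) = X) :
    (∀ X Y : V,
      (inner ℝ X Y : ℝ) + inner ℝ (ξ X) (ξ Y) = inner ℝ X (Y - ξd (ξ Y))) ∧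
    (∀ X : V,
      (∃ (Y : V) (γ : so), γ ∈ mᗮ ∧
        ((Linv X, ξ (Linv X)) : V × so) = (Y, ξ Y + γ)) ∧
      (∀ (Y : V) (γ : so), γ ∈ mᗮ →
        (inner ℝ (X - Linv X) Y : ℝ) + inner ℝ ((0 : so) - ξ (Linv X)) (ξ Y + γ) = 0)) ∧
    (∀ (α αg αm : so), αg ∈ mᗮ → αm ∈ m → α = αg + αm →
      (∃ (Y : V) (γ : so), γ ∈ mᗮ ∧
        ((-(Linv (ξd αm)), αg - ξ (Linv (ξd αm))) : V × so) = (Y, ξ Y + γ)) ∧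
      (∀ (Y : V) (γ : so), γ ∈ mᗮ →
        (inner ℝ ((0 : V) - (-(Linv (ξd αm)))) Y : ℝ)
          + inner ℝ (α - (αg - ξ (Linv (ξd αm)))) (ξ Y + γ) = 0)) :=
  stmt11_general V so m ξ hξm ξd hξd Linv hLinv1
end

section
/- In the setting of the previous item, the orthogonal projection of X^h onto the orthogonal complement T^⊥ of T in V ⊕ so equals −ξ_{L⁻¹X} − (ξ·ξ_{L⁻¹X})^h, and the orthogonal projection of α ∈ so onto T^⊥ equals α_m + ξ_{L⁻¹(ξ·α_m)} + (L⁻¹(ξ·α_m))^h. -/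
/-!
For `β ∈ m` the vector `(ξ·β, β)` is orthogonal to `T`: `⟪ξ·β, Y⟫ = -⟪β, ξ Y⟫` cancels the
`ξ Y` part, and `β ⊥ mᗮ` kills the `g'` part. Both candidate projections have this form, with
`β = -ξ_{L⁻¹X}` and `β = α_m + ξ_{L⁻¹(ξ·α_m)}` respectively (for the latter, `L L⁻¹ = Id` gives
`ξ·β = L⁻¹(ξ·α_m)`), and `L L⁻¹ = Id` also shows that the remainders lie in `T`.
-/

section AdjointPair

variable {V so : Type*} [NormedAddCommGroup V] [InnerProductSpace ℝ V]
  [NormedAddCommGroup so] [InnerProductSpace ℝ so]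
  {m : Submodule ℝ so} {ξ : V →ₗ[ℝ] so} {ξd : so →ₗ[ℝ] V}

theorem inner_adjoint_add_inner_eq_zero
    (hξd : ∀ (α : so) (X : V), (inner ℝ (ξd α) X : ℝ) = - inner ℝ α (ξ X))
    {β γ : so} (hβ : β ∈ m) (hγ : γ ∈ mᗮ) (Y : V) :
    (inner ℝ (ξd β) Y : ℝ) + inner ℝ β (ξ Y + γ) = 0 := by
  have hβγ : (inner ℝ β γ : ℝ) = 0 := hγ β hβ
  rw [inner_add_right, hβγ, hξd]
  ring

theorem adjoint_add_apply_inverse {Linv : V →ₗ[ℝ] V}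
    (hLinv : ∀ X : V, Linv X - ξd (ξ (Linv X)) = X) (α : so) :
    ξd (α + ξ (Linv (ξd α))) = Linv (ξd α) := by
  rw [map_add]
  exact (sub_eq_iff_eq_add.mp (hLinv (ξd α))).symm

end AdjointPair

/-- In `V × so` the space `T` is encoded as `{(Y, ξ Y + γ) : Y ∈ V, γ ∈ mᗮ}`, and a vector `w`
is the orthogonal projection of `p` onto `T^⊥` iff `w ⊥ T` and `p − w ∈ T`. -/
theorem stmt12_general (V so : Type*) [NormedAddCommGroup V] [InnerProductSpace ℝ V]
    [NormedAddCommGroup so] [InnerProductSpace ℝ so]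
    (m : Submodule ℝ so)
    (ξ : V →ₗ[ℝ] so) (hξm : ∀ X, ξ X ∈ m)
    (ξd : so →ₗ[ℝ] V) (hξd : ∀ (α : so) (X : V), (inner ℝ (ξd α) X : ℝ) = - inner ℝ α (ξ X))
    (Linv : V →ₗ[ℝ] V)
    (hLinv1 : ∀ X : V, Linv X - ξd (ξ (Linv X)) = X) :
    (∀ X : V,
      (∀ (Y : V) (γ : so), γ ∈ mᗮ →
        (inner ℝ (-(ξd (ξ (Linv X)))) Y : ℝ) + inner ℝ (-(ξ (Linv X))) (ξ Y + γ) = 0) ∧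
      (∃ (Y : V) (γ : so), γ ∈ mᗮ ∧
        ((X - (-(ξd (ξ (Linv X)))), (0 : so) - (-(ξ (Linv X)))) : V × so) = (Y, ξ Y + γ))) ∧
    (∀ (α αg αm : so), αg ∈ mᗮ → αm ∈ m → α = αg + αm →
      (∀ (Y : V) (γ : so), γ ∈ mᗮ →
        (inner ℝ (Linv (ξd αm)) Y : ℝ) + inner ℝ (αm + ξ (Linv (ξd αm))) (ξ Y + γ) = 0) ∧
      (∃ (Y : V) (γ : so), γ ∈ mᗮ ∧
        (((0 : V) - Linv (ξd αm), α - (αm + ξ (Linv (ξd αm)))) : V × so) = (Y, ξ Y + γ))) := by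
  refine ⟨fun X => ⟨fun Y γ hγ => ?_, ?_⟩, fun α αg αm hαg hαm hα => ⟨fun Y γ hγ => ?_, ?_⟩⟩
  · simpa using inner_adjoint_add_inner_eq_zero hξd (Submodule.neg_mem _ (hξm (Linv X))) hγ Y
  · refine ⟨Linv X, 0, Submodule.zero_mem _, ?_⟩
    rw [sub_neg_eq_add, eq_sub_iff_add_eq.mp (hLinv1 X).symm]
    simp
  · have h := inner_adjoint_add_inner_eq_zero hξd (m.add_mem hαm (hξm (Linv (ξd αm)))) hγ Y
    rwa [adjoint_add_apply_inverse hLinv1] at h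
  · refine ⟨-Linv (ξd αm), αg, hαg, ?_⟩
    rw [hα, map_neg, zero_sub, Prod.mk.injEq]
    exact ⟨rfl, by abel⟩

/-- Pointwise linear algebra of Proposition 4 (normal part): in `V ⊕ so` with
`T = {(Y, ξ Y + γ) : Y ∈ V, γ ∈ mᗮ}`, the orthogonal projection of `X^h = (X,0)` onto
`T^⊥` is `−ξ_{L⁻¹X} − (ξd ξ_{L⁻¹X})^h = (−ξd(ξ(L⁻¹X)), −ξ(L⁻¹X))`, and the orthogonal
projection of `(0,α)` onto `T^⊥` is
`α_m + ξ_{L⁻¹(ξd α_m)} + (L⁻¹(ξd α_m))^h = (L⁻¹(ξd α_m), α_m + ξ(L⁻¹(ξd α_m)))`.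
A vector `w` is the orthogonal projection of `p` onto `T^⊥` iff `w ⊥ T` and `p − w ∈ T`. -/
theorem stmt12 (V so : Type*) [NormedAddCommGroup V] [InnerProductSpace ℝ V]
    [NormedAddCommGroup so] [InnerProductSpace ℝ so]
    (m : Submodule ℝ so)
    (ξ : V →ₗ[ℝ] so) (hξm : ∀ X, ξ X ∈ m)
    (ξd : so →ₗ[ℝ] V) (hξd : ∀ (α : so) (X : V), (inner ℝ (ξd α) X : ℝ) = - inner ℝ α (ξ X))
    (Linv : V →ₗ[ℝ] V)
    (hLinv1 : ∀ X : V, Linv X - ξd (ξ (Linv X)) = X)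
    (hLinv2 : ∀ X : V, Linv (X - ξd (ξ X)) = X) :
    (∀ X : V,
      (∀ (Y : V) (γ : so), γ ∈ mᗮ →
        (inner ℝ (-(ξd (ξ (Linv X)))) Y : ℝ) + inner ℝ (-(ξ (Linv X))) (ξ Y + γ) = 0) ∧
      (∃ (Y : V) (γ : so), γ ∈ mᗮ ∧
        ((X - (-(ξd (ξ (Linv X)))), (0 : so) - (-(ξ (Linv X)))) : V × so) = (Y, ξ Y + γ))) ∧
    (∀ (α αg αm : so), αg ∈ mᗮ → αm ∈ m → α = αg + αm →
      (∀ (Y : V) (γ : so), γ ∈ mᗮ →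
        (inner ℝ (Linv (ξd αm)) Y : ℝ) + inner ℝ (αm + ξ (Linv (ξd αm))) (ξ Y + γ) = 0) ∧
      (∃ (Y : V) (γ : so), γ ∈ mᗮ ∧
        (((0 : V) - Linv (ξd αm), α - (αm + ξ (Linv (ξd αm)))) : V × so) = (Y, ξ Y + γ))) :=
  stmt12_general V so m ξ hξm ξd hξd Linv hLinv1
end

section
/- If the intrinsic torsion ξ of a G-structure P ⊂ SO(M) vanishes identically, then P is a totally geodesic submanifold of SO(M) equipped with the metric g_{SO(M)}. -/
/-- If the intrinsic torsion `ξ` of a `G`-structure `P ⊂ SO(M)` vanishes identically,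
then `P` is totally geodesic in `(SO(M), g_{SO(M)})`: all components of the second
fundamental form vanish.  The second fundamental form `Π` is encoded, via the
identification of the normal space with `m(M)` (`α ↦ α⁺`), by its three components
`Phh` (horizontal-horizontal), `Phv` (horizontal-vertical), `Pvv` (vertical-vertical),
which satisfy the formulas of Theorem 8 of the paper; `Bf` is the fibre inner product,
nondegenerate on the `m`-part (projection `pm`). -/
theorem stmt14 (F VF : Type*) [CommRing F] [Algebra ℝ F]
    [AddCommGroup VF] [Module F VF]
    (g : VF → VF → F)
    (conn : VF → VF → VF)
    (hconn0 : ∀ X, conn X (0 : VF) = 0)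
    (connE : VF → Module.End F VF → Module.End F VF)
    (hconnE : ∀ (X : VF) (α : Module.End F VF) (Y : VF),
      connE X α Y = conn X (α Y) - α (conn X Y))
    (ξ : VF → Module.End F VF)
    (Rα : Module.End F VF → VF → VF)
    (Bf : Module.End F VF → Module.End F VF → F)
    (hBf0 : ∀ α, Bf 0 α = 0)
    (pm : Module.End F VF →ₗ[F] Module.End F VF)
    (Phh : VF → VF → Module.End F VF)
    (Phv : VF → Module.End F VF → Module.End F VF)
    (Pvv : Module.End F VF → Module.End F VF → Module.End F VF)
    (hPhhm : ∀ X Y, pm (Phh X Y) = Phh X Y)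
    (hPhvm : ∀ X γ, pm (Phv X γ) = Phv X γ)
    (hPhh : ∀ (X Y : VF) (α : Module.End F VF), pm α = α →
      Bf (Phh X Y) α = algebraMap ℝ F (1/2) *
        Bf ((connE X (ξ Y) - ξ (conn X Y)) + (connE Y (ξ X) - ξ (conn Y X))
            - ξ (Rα (ξ X) Y + Rα (ξ Y) X)) α)
    (hPhv : ∀ (X : VF) (γ α : Module.End F VF), pm α = α →
      Bf (Phv X γ) α = algebraMap ℝ F (1/2) *
        Bf (pm (ξ X * γ - γ * ξ X) - ξ (Rα γ X)) α)
    (hPvv : ∀ β γ, Pvv β γ = 0)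
    (hnd : ∀ β : Module.End F VF, pm β = β →
      (∀ α : Module.End F VF, pm α = α → Bf β α = 0) → β = 0)
    (hξ0 : ∀ X, ξ X = 0) :
    (∀ X Y, Phh X Y = 0) ∧ (∀ X γ, Phv X γ = 0) ∧ (∀ β γ, Pvv β γ = 0) := by
  have hE0 : ∀ X : VF, connE X 0 = 0 := by
    intro X
    ext Y
    simp [hconnE, hconn0]
  refine ⟨?_, ?_, hPvv⟩
  · intro X Y
    refine hnd _ (hPhhm X Y) ?_
    intro α hα
    rw [hPhh X Y α hα]
    simp [hξ0, hE0, hBf0]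
  · intro X γ
    refine hnd _ (hPhvm X γ) ?_
    intro α hα
    rw [hPhv X γ α hα]
    simp [hξ0, hBf0]
end
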